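/- arXiv:1102.3526 — 5 statements merged into one kernel-verified Lean document; each statement's English description precedes it below -/
import Mathlib

section
/- If U is an ℓ-dimensional F₂-linear subspace of V = F₂^m, then P(U) ≤ (1−p)^{m−ℓ} when p ≤ 1/2, and P(U) ≤ p^{m−ℓ} when p ≥ 1/2. -/
/-!
STATEMENT 2: If `U` is an `ℓ`-dimensional `F₂`-linear subspace of `V = F₂^m`, then
`P(U) ≤ (1−p)^(m−ℓ)` when `p ≤ 1/2`, and `P(U) ≤ p^(m−ℓ)` when `p ≥ 1/2`,
where `P(v) = p^‖v‖ (1−p)^(m−‖v‖)` is the product Bernoulli(p) measure and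
`P(U) = ∑_{v ∈ U} P(v)`.
-/

open Finset

private lemma zmod2_ne_zero {x : ZMod 2} (h : x ≠ 0) : x = 1 := by
  revert h; revert x; decide

private lemma prod_ite_eq_pow (p : ℝ) {n : ℕ} (v : Fin n → ZMod 2) :
    ∏ i, (if v i = 0 then (1 - p) else p) =
      p ^ hammingNorm v * (1 - p) ^ (n - hammingNorm v) := by
  classical
  rw [Finset.prod_ite, Finset.prod_const, Finset.prod_const]
  have h1 : (Finset.univ.filter fun i => ¬ v i = 0).card = hammingNorm v := rfl
  have h2 : (Finset.univ.filter fun i => v i = 0).card = n - hammingNorm v := by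
    have h3 := Finset.card_filter_add_card_filter_not
      (s := (Finset.univ : Finset (Fin n))) (p := fun i => v i = 0)
    simp only [Finset.card_univ, Fintype.card_fin] at h3
    omega
  rw [h1, h2]; ring

private lemma key (p : ℝ) (hp0 : 0 ≤ p) (hp1 : p ≤ 1) :
    ∀ (n ℓ : ℕ) (A : Finset (Fin n → ZMod 2)), A.Nonempty →
      (∀ a ∈ A, ∀ b ∈ A, ∀ c ∈ A, a + b + c ∈ A) → A.card = 2 ^ ℓ →
      ∑ v ∈ A, ∏ i, (if v i = 0 then (1 - p) else p) ≤ (max p (1 - p)) ^ (n - ℓ) := by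
  classical
  intro n
  induction n with
  | zero =>
    intro ℓ A hne hcl hcard
    have hcardle : A.card ≤ 1 := by
      have := Finset.card_le_univ A
      simpa [Fintype.card_fun] using this
    have hl0 : ℓ = 0 := by
      by_contra h
      have : 2 ≤ 2 ^ ℓ := Nat.one_lt_two_pow (by omega)
      omega
    subst hl0
    have : ∑ v ∈ A, ∏ i : Fin 0, (if v i = 0 then (1 - p) else p) = A.card := by
      simp
    rw [this, hcard]
    norm_num
  | succ n ih =>
    intro ℓ A hne hcl hcard
    set q := max p (1 - p) with hq
    have hq0 : 0 ≤ q := le_trans hp0 (le_max_left _ _)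
    have hpq : p ≤ q := le_max_left _ _
    have h1pq : 1 - p ≤ q := le_max_right _ _
    set r : (Fin (n+1) → ZMod 2) → (Fin n → ZMod 2) := fun v => v ∘ Fin.succ with hr
    set g : (Fin n → ZMod 2) → ℝ := fun w => ∏ i, (if w i = 0 then (1 - p) else p) with hg
    have hg0 : ∀ w, 0 ≤ g w := fun w =>
      Finset.prod_nonneg fun i _ => by split <;> linarith
    set A0 := A.filter (fun v => v 0 = 0) with hA0
    set A1 := A.filter (fun v => ¬ v 0 = 0) with hA1
    set B0 := A0.image r with hB0
    set B1 := A1.image r with hB1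
    have hmemA0 : ∀ v ∈ A0, v ∈ A ∧ v 0 = 0 := fun v hv => Finset.mem_filter.mp hv
    have hmemA1 : ∀ v ∈ A1, v ∈ A ∧ v 0 = 1 := fun v hv => by
      have := Finset.mem_filter.mp hv
      exact ⟨this.1, zmod2_ne_zero this.2⟩
    -- injectivity of r on A0 and A1
    have hinj : ∀ (c : ZMod 2), ∀ v w : Fin (n+1) → ZMod 2, v 0 = c → w 0 = c →
        r v = r w → v = w := by
      intro c v w hv hw h
      funext i
      refine Fin.cases ?_ ?_ i
      · rw [hv, hw]
      · intro j; exact congrFun h j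
    have hinj0 : Set.InjOn r A0 := fun v hv w hw h =>
      hinj 0 v w (hmemA0 v hv).2 (hmemA0 w hw).2 h
    have hinj1 : Set.InjOn r A1 := fun v hv w hw h =>
      hinj 1 v w (hmemA1 v hv).2 (hmemA1 w hw).2 h
    have hcard0 : B0.card = A0.card := Finset.card_image_of_injOn hinj0
    have hcard1 : B1.card = A1.card := Finset.card_image_of_injOn hinj1
    -- r is additive
    have hradd : ∀ a b c : Fin (n+1) → ZMod 2, r (a + b + c) = r a + r b + r c := by
      intro a b c; funext i; simp [hr]
    -- closure
    have hcl0 : ∀ a ∈ B0, ∀ b ∈ B0, ∀ c ∈ B0, a + b + c ∈ B0 := by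
      intro a ha b hb c hc
      obtain ⟨va, hva, rfl⟩ := Finset.mem_image.mp ha
      obtain ⟨vb, hvb, rfl⟩ := Finset.mem_image.mp hb
      obtain ⟨vc, hvc, rfl⟩ := Finset.mem_image.mp hc
      refine Finset.mem_image.mpr ⟨va + vb + vc, ?_, (hradd va vb vc).symm⟩
      refine Finset.mem_filter.mpr ⟨hcl va (hmemA0 va hva).1 vb (hmemA0 vb hvb).1 vc (hmemA0 vc hvc).1, ?_⟩
      simp [Pi.add_apply, (hmemA0 va hva).2, (hmemA0 vb hvb).2, (hmemA0 vc hvc).2]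
    have hcl1 : ∀ a ∈ B1, ∀ b ∈ B1, ∀ c ∈ B1, a + b + c ∈ B1 := by
      intro a ha b hb c hc
      obtain ⟨va, hva, rfl⟩ := Finset.mem_image.mp ha
      obtain ⟨vb, hvb, rfl⟩ := Finset.mem_image.mp hb
      obtain ⟨vc, hvc, rfl⟩ := Finset.mem_image.mp hc
      refine Finset.mem_image.mpr ⟨va + vb + vc, ?_, (hradd va vb vc).symm⟩
      refine Finset.mem_filter.mpr ⟨hcl va (hmemA1 va hva).1 vb (hmemA1 vb hvb).1 vc (hmemA1 vc hvc).1, ?_⟩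
      have : (va + vb + vc) 0 = 1 := by
        simp only [Pi.add_apply, (hmemA1 va hva).2, (hmemA1 vb hvb).2, (hmemA1 vc hvc).2]
        decide
      rw [this]; decide
    -- sum decomposition
    have hsplit : ∑ v ∈ A, ∏ i, (if v i = 0 then (1 - p) else p) =
        (∑ v ∈ A0, ∏ i, (if v i = 0 then (1 - p) else p)) +
        (∑ v ∈ A1, ∏ i, (if v i = 0 then (1 - p) else p)) :=
      (Finset.sum_filter_add_sum_filter_not A (fun v => v 0 = 0) _).symm
    have hterm : ∀ v : Fin (n+1) → ZMod 2,
        ∏ i, (if v i = 0 then (1 - p) else p) =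
          (if v 0 = 0 then (1 - p) else p) * g (r v) := by
      intro v
      rw [Fin.prod_univ_succ]
      rfl
    have hS0 : ∑ v ∈ A0, ∏ i, (if v i = 0 then (1 - p) else p) = (1 - p) * ∑ w ∈ B0, g w := by
      rw [Finset.sum_image hinj0, Finset.mul_sum]
      refine Finset.sum_congr rfl fun v hv => ?_
      rw [hterm v, (hmemA0 v hv).2]
      simp
    have hS1 : ∑ v ∈ A1, ∏ i, (if v i = 0 then (1 - p) else p) = p * ∑ w ∈ B1, g w := by
      rw [Finset.sum_image hinj1, Finset.mul_sum]
      refine Finset.sum_congr rfl fun v hv => ?_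
      rw [hterm v, (hmemA1 v hv).2]
      norm_num
    have hcardsplit : A0.card + A1.card = 2 ^ ℓ := by
      rw [← hcard]; exact Finset.card_filter_add_card_filter_not _
    have hBle : ∀ B : Finset (Fin n → ZMod 2), B.card ≤ 2 ^ n := by
      intro B
      have := Finset.card_le_univ B
      simpa [Fintype.card_fun] using this
    by_cases hA1e : A1 = ∅
    · -- A = A0
      have hA0card : A0.card = 2 ^ ℓ := by
        have : A1.card = 0 := by rw [hA1e]; rfl
        omega
      have hln : ℓ ≤ n := by
        have h2 : (2:ℕ) ^ ℓ ≤ 2 ^ n := by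
          have := hBle B0; rw [hcard0, hA0card] at this; exact this
        exact (Nat.pow_le_pow_iff_right (by norm_num)).mp h2
      have hB0ne : B0.Nonempty := by
        rw [← Finset.card_pos, hcard0, hA0card]; positivity
      have hIH := ih ℓ B0 hB0ne hcl0 (by rw [hcard0, hA0card])
      have hB1e : B1 = ∅ := by rw [hB1, hA1e]; rfl
      rw [hsplit, hS0, hS1, hB1e]
      simp only [Finset.sum_empty, mul_zero, add_zero]
      have hsum0 : (0:ℝ) ≤ ∑ w ∈ B0, g w := Finset.sum_nonneg fun w _ => hg0 w
      calc (1 - p) * ∑ w ∈ B0, g w ≤ q * q ^ (n - ℓ) :=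
            mul_le_mul h1pq hIH hsum0 hq0
        _ = q ^ (n + 1 - ℓ) := by rw [← pow_succ']; congr 1; omega
    · by_cases hA0e : A0 = ∅
      · have hA1card : A1.card = 2 ^ ℓ := by
          have : A0.card = 0 := by rw [hA0e]; rfl
          omega
        have hln : ℓ ≤ n := by
          have h2 : (2:ℕ) ^ ℓ ≤ 2 ^ n := by
            have := hBle B1; rw [hcard1, hA1card] at this; exact this
          exact (Nat.pow_le_pow_iff_right (by norm_num)).mp h2
        have hB1ne : B1.Nonempty := by
          rw [← Finset.card_pos, hcard1, hA1card]; positivity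
        have hIH := ih ℓ B1 hB1ne hcl1 (by rw [hcard1, hA1card])
        have hB0e : B0 = ∅ := by rw [hB0, hA0e]; rfl
        rw [hsplit, hS0, hS1, hB0e]
        simp only [Finset.sum_empty, mul_zero, zero_add]
        have hsum1 : (0:ℝ) ≤ ∑ w ∈ B1, g w := Finset.sum_nonneg fun w _ => hg0 w
        calc p * ∑ w ∈ B1, g w ≤ q * q ^ (n - ℓ) :=
              mul_le_mul hpq hIH hsum1 hq0
          _ = q ^ (n + 1 - ℓ) := by rw [← pow_succ']; congr 1; omega
      · -- both nonempty
        obtain ⟨a0, ha0⟩ := Finset.nonempty_of_ne_empty hA0e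
        obtain ⟨a1, ha1⟩ := Finset.nonempty_of_ne_empty hA1e
        have hmapsto : ∀ (S T : Finset (Fin (n+1) → ZMod 2)) (s t : Fin (n+1) → ZMod 2)
            (cS cT : ZMod 2), (∀ v ∈ S, v ∈ A ∧ v 0 = cS) → s ∈ S →
            (∀ v ∈ A, v 0 = cT → v ∈ T) → t ∈ A → t 0 = cT + cS + cS →
            S.card ≤ T.card := by
          intro S T s t cS cT hS hsS hT htA ht0
          refine Finset.card_le_card_of_injOn (fun x => x + s + t) ?_ ?_
          · intro x hx
            have hxA := hS x hx
            refine hT _ (hcl x hxA.1 s (hS s hsS).1 t htA) ?_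
            have h4 : ∀ a b : ZMod 2, a + a + (b + a + a) = b := by decide
            simp only [Pi.add_apply, hxA.2, (hS s hsS).2, ht0]
            exact h4 cS cT
          · intro x hx y hy hxy
            simpa using congrArg (fun z => z + s + t) hxy
        have hc01 : A0.card = A1.card := by
          have h1 : A0.card ≤ A1.card := by
            refine hmapsto A0 A1 a0 a1 0 1 hmemA0 ha0 ?_ (hmemA1 a1 ha1).1 ?_
            · intro v hv hv0
              refine Finset.mem_filter.mpr ⟨hv, ?_⟩
              rw [hv0]; decide
            · rw [(hmemA1 a1 ha1).2]; decide
          have h2 : A1.card ≤ A0.card := by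
            refine hmapsto A1 A0 a1 a0 1 0 hmemA1 ha1 ?_ (hmemA0 a0 ha0).1 ?_
            · intro v hv hv0
              exact Finset.mem_filter.mpr ⟨hv, by rw [hv0]⟩
            · rw [(hmemA0 a0 ha0).2]; decide
          omega
        have hl1 : 1 ≤ ℓ := by
          by_contra h
          have hl0 : ℓ = 0 := by omega
          have : A0.card = 0 ∨ A1.card = 0 := by
            rw [hl0] at hcardsplit; simp at hcardsplit; omega
          rcases this with h' | h'
          · exact hA0e (Finset.card_eq_zero.mp h')
          · exact hA1e (Finset.card_eq_zero.mp h')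
        have hA0card : A0.card = 2 ^ (ℓ - 1) := by
          have : (2:ℕ) ^ ℓ = 2 * 2 ^ (ℓ - 1) := by
            conv_lhs => rw [show ℓ = (ℓ - 1) + 1 by omega]
            ring
          omega
        have hln : ℓ - 1 ≤ n := by
          have h2 : (2:ℕ) ^ (ℓ-1) ≤ 2 ^ n := by
            have := hBle B0; rw [hcard0, hA0card] at this; exact this
          exact (Nat.pow_le_pow_iff_right (by norm_num)).mp h2
        have hB0ne : B0.Nonempty := by
          rw [← Finset.card_pos, hcard0, hA0card]; positivity
        have hB1ne : B1.Nonempty := by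
          rw [← Finset.card_pos, hcard1, ← hc01, hA0card]; positivity
        have hIH0 := ih (ℓ-1) B0 hB0ne hcl0 (by rw [hcard0, hA0card])
        have hIH1 := ih (ℓ-1) B1 hB1ne hcl1 (by rw [hcard1, ← hc01, hA0card])
        have hsum0 : (0:ℝ) ≤ ∑ w ∈ B0, g w := Finset.sum_nonneg fun w _ => hg0 w
        have hsum1 : (0:ℝ) ≤ ∑ w ∈ B1, g w := Finset.sum_nonneg fun w _ => hg0 w
        rw [hsplit, hS0, hS1]
        have hqpow : (0:ℝ) ≤ q ^ (n - (ℓ-1)) := pow_nonneg hq0 _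
        have he : n - (ℓ - 1) = n + 1 - ℓ := by omega
        calc (1 - p) * ∑ w ∈ B0, g w + p * ∑ w ∈ B1, g w
            ≤ (1 - p) * q ^ (n - (ℓ-1)) + p * q ^ (n - (ℓ-1)) := by
              gcongr <;> linarith
          _ = q ^ (n - (ℓ-1)) := by ring
          _ = q ^ (n + 1 - ℓ) := by rw [he]

open scoped Classical in
theorem subspace_bernoulli_prob_le
    (m : ℕ) (hm : 1 ≤ m) (p : ℝ) (hp0 : 0 ≤ p) (hp1 : p ≤ 1)
    (U : Submodule (ZMod 2) (Fin m → ZMod 2)) (ℓ : ℕ)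
    (hℓ : Module.finrank (ZMod 2) U = ℓ) :
    (p ≤ 1 / 2 →
      ∑ v ∈ Finset.univ.filter (fun v : Fin m → ZMod 2 => v ∈ U),
        p ^ hammingNorm v * (1 - p) ^ (m - hammingNorm v) ≤ (1 - p) ^ (m - ℓ)) ∧
    (1 / 2 ≤ p →
      ∑ v ∈ Finset.univ.filter (fun v : Fin m → ZMod 2 => v ∈ U),
        p ^ hammingNorm v * (1 - p) ^ (m - hammingNorm v) ≤ p ^ (m - ℓ)) := by
  set A := Finset.univ.filter (fun v : Fin m → ZMod 2 => v ∈ U) with hA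
  have hne : A.Nonempty :=
    ⟨0, Finset.mem_filter.mpr ⟨Finset.mem_univ _, U.zero_mem⟩⟩
  have hcl : ∀ a ∈ A, ∀ b ∈ A, ∀ c ∈ A, a + b + c ∈ A := by
    intro a ha b hb c hc
    refine Finset.mem_filter.mpr ⟨Finset.mem_univ _, ?_⟩
    exact U.add_mem (U.add_mem (Finset.mem_filter.mp ha).2 (Finset.mem_filter.mp hb).2)
      (Finset.mem_filter.mp hc).2
  have hcardA : A.card = 2 ^ ℓ := by
    rw [hA, ← Fintype.card_subtype]
    rw [show Fintype.card {v : Fin m → ZMod 2 // v ∈ U} = Fintype.card U from rfl,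
      Module.card_eq_pow_finrank (K := ZMod 2) (V := U), ZMod.card, hℓ]
  have hsum : ∑ v ∈ A, p ^ hammingNorm v * (1 - p) ^ (m - hammingNorm v)
      = ∑ v ∈ A, ∏ i, (if v i = 0 then (1 - p) else p) :=
    Finset.sum_congr rfl fun v _ => (prod_ite_eq_pow p v).symm
  have hmain := key p hp0 hp1 m ℓ A hne hcl hcardA
  constructor
  · intro hple
    have hmax : max p (1 - p) = 1 - p := max_eq_right (by linarith)
    rw [hsum]
    calc ∑ v ∈ A, ∏ i, (if v i = 0 then (1 - p) else p)
        ≤ (max p (1 - p)) ^ (m - ℓ) := hmain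
      _ = (1 - p) ^ (m - ℓ) := by rw [hmax]
  · intro hple
    have hmax : max p (1 - p) = p := max_eq_left (by linarith)
    rw [hsum]
    calc ∑ v ∈ A, ∏ i, (if v i = 0 then (1 - p) else p)
        ≤ (max p (1 - p)) ^ (m - ℓ) := hmain
      _ = p ^ (m - ℓ) := by rw [hmax]
end

section
/- Fix 0 < p ≤ 1/2, an integer d ≥ 1, an arbitrary fixed matrix H₁ ∈ F₂^{n̄×n}, and a fixed vector c = (c₁,…,c_d) ∈ (F₂ⁿ)^d with c₁ ≠ 0. If the entries of H₂,…,H_d are i.i.d. Bernoulli(p) random variables, then P(𝐇_d c = 0) ≤ (1−p)^{n̄(d−1)}. -/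
/-!
STATEMENT 4: For a fixed `H₁` and a fixed `c = (c₁,…,c_d)` with `c₁ ≠ 0`, if the entries
of `H₂,…,H_d` are i.i.d. Bernoulli(p) with `0 < p ≤ 1/2`, then `P(𝐇_d c = 0) ≤ (1−p)^{n̄(d−1)}`.
-/

open scoped BigOperators

/-- Binary entropy function in bits (with `H(0) = H(1) = 0`, since `Real.logb 2 0 = 0`). -/
noncomputable def binH (x : ℝ) : ℝ := -(x * Real.logb 2 x) - (1 - x) * Real.logb 2 (1 - x)

/-- The `n̄d × nd` block lower-triangular Toeplitz matrix `𝐇_d` whose `(i,j)`-th block is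
`H (i−j+1)` for `i ≥ j` and `0` otherwise (blocks are indexed from `0`, so the block
sequence used is `H 1, H 2, …, H d`). -/
def toep (nb n : ℕ) (H : ℕ → Matrix (Fin nb) (Fin n) (ZMod 2)) (d : ℕ) :
    Matrix (Fin d × Fin nb) (Fin d × Fin n) (ZMod 2) :=
  fun p q => if (q.1 : ℕ) ≤ (p.1 : ℕ) then H ((p.1 : ℕ) - (q.1 : ℕ) + 1) p.2 q.2 else 0

/-- A block vector `(c₁, …, c_d) ∈ (F₂ⁿ)^d` flattened into a vector indexed by `Fin d × Fin n`. -/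
def flat {d n : ℕ} (c : Fin d → Fin n → ZMod 2) : Fin d × Fin n → ZMod 2 :=
  fun q => c q.1 q.2

/-- Hamming weight `‖c‖` of a block vector. -/
def wt {d n : ℕ} (c : Fin d → Fin n → ZMod 2) : ℕ := hammingNorm (flat c)

/-- `C_d = {c ∈ (F₂ⁿ)^d : 𝐇_d c = 0 and c₁ ≠ 0}`. -/
def Cset (nb n : ℕ) (H : ℕ → Matrix (Fin nb) (Fin n) (ZMod 2)) (d : ℕ) (hd : 0 < d) :
    Finset (Fin d → Fin n → ZMod 2) :=
  Finset.univ.filter fun c =>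
    Matrix.mulVec (toep nb n H d) (flat c) = 0 ∧ c ⟨0, hd⟩ ≠ 0

/-- `numW(w,d) = #{c ∈ C_d : ‖c‖ = w}`. -/
def numW (nb n : ℕ) (H : ℕ → Matrix (Fin nb) (Fin n) (ZMod 2)) (d : ℕ) (hd : 0 < d)
    (w : ℕ) : ℕ :=
  ((Cset nb n H d hd).filter fun c => wt c = w).card

/-- Bernoulli(p) weight of a binary matrix: each entry is `1` w.p. `p`, `0` w.p. `1−p`. -/
noncomputable def matWt (p : ℝ) {nb n : ℕ} (M : Matrix (Fin nb) (Fin n) (ZMod 2)) : ℝ :=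
  ∏ a : Fin nb, ∏ b : Fin n, if M a b = 1 then p else 1 - p

/-- The i.i.d. product weight of a finite tuple of binary matrices. -/
noncomputable def tupWt (p : ℝ) {ι : Type} [Fintype ι] {nb n : ℕ}
    (ω : ι → Matrix (Fin nb) (Fin n) (ZMod 2)) : ℝ := ∏ i, matWt p (ω i)

/-- The random block sequence in the ensemble `TZ_p`: block `1` is the fixed matrix `H1`,
blocks `τ ≥ 2` are random (given by the sample point `ω`; the slots `ω 0, ω 1` are
unused, so summing their Bernoulli weights out leaves the probability unchanged). -/
def seq {nb n : ℕ} (H1 : Matrix (Fin nb) (Fin n) (ZMod 2)) {D : ℕ}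
    (ω : Fin (D + 1) → Matrix (Fin nb) (Fin n) (ZMod 2)) :
    ℕ → Matrix (Fin nb) (Fin n) (ZMod 2) :=
  fun τ => if τ = 1 then H1 else if h2 : τ < D + 1 then ω ⟨τ, h2⟩ else 0

open scoped Classical in
/-- Probability, over the blocks `H₂, …, H_{D}` having i.i.d. Bernoulli(p) entries,
of an event `S` (a sum of i.i.d. product weights over the finite sample space). -/
noncomputable def prOmega (p : ℝ) {nb n : ℕ} (D : ℕ)
    (S : (Fin (D + 1) → Matrix (Fin nb) (Fin n) (ZMod 2)) → Prop) : ℝ :=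
  ∑ ω : Fin (D + 1) → Matrix (Fin nb) (Fin n) (ZMod 2), if S ω then tupWt p ω else 0


/-! ### Auxiliary machinery for the proof -/

noncomputable def wBit (p : ℝ) (x : ZMod 2) : ℝ := if x = 1 then p else 1 - p

def flatOmega {D nb n : ℕ} :
    (Fin D → Matrix (Fin nb) (Fin n) (ZMod 2)) ≃ (Fin D × Fin nb × Fin n → ZMod 2) where
  toFun ω t := ω t.1 t.2.1 t.2.2
  invFun f i := Matrix.of fun a b => f (i, a, b)
  left_inv _ := rfl
  right_inv _ := rfl

lemma tupWt_eq {D nb n : ℕ} (p : ℝ) (ω : Fin D → Matrix (Fin nb) (Fin n) (ZMod 2)) :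
    tupWt p ω = ∏ t : Fin D × Fin nb × Fin n, wBit p (ω t.1 t.2.1 t.2.2) := by
  rw [Fintype.prod_prod_type]
  unfold tupWt matWt wBit
  refine Finset.prod_congr rfl fun i _ => ?_
  rw [Fintype.prod_prod_type]

lemma sum_wBit (p : ℝ) : ∑ x : ZMod 2, wBit p x = 1 := by
  have h : (Finset.univ : Finset (ZMod 2)) = {0, 1} := by decide
  rw [h, Finset.sum_insert (by decide), Finset.sum_singleton]
  simp only [wBit]
  norm_num

lemma sum_fun_wBit {J : Type*} [Fintype J] [DecidableEq J] (p : ℝ) :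
    ∑ f : J → ZMod 2, ∏ j, wBit p (f j) = 1 := by
  rw [← Fintype.piFinset_univ, ← Finset.prod_univ_sum]
  simp [sum_wBit]

lemma key_unique {nb n d : ℕ} (hd : 0 < d)
    (H1 : Matrix (Fin nb) (Fin n) (ZMod 2))
    (c : Fin d → Fin n → ZMod 2) (b0 : Fin n) (hb0 : c ⟨0, hd⟩ b0 = 1)
    (ω ω' : Fin (d+1) → Matrix (Fin nb) (Fin n) (ZMod 2))
    (hagree : ∀ i : Fin (d+1), ∀ a : Fin nb, ∀ b : Fin n,
        ¬(2 ≤ (i:ℕ) ∧ b = b0) → ω i a b = ω' i a b)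
    (hE : Matrix.mulVec (toep nb n (seq H1 ω) d) (flat c) = 0)
    (hE' : Matrix.mulVec (toep nb n (seq H1 ω') d) (flat c) = 0) :
    ω = ω' := by
  have main : ∀ i : ℕ, ∀ hi : i < d+1, ∀ a b, ω ⟨i,hi⟩ a b = ω' ⟨i,hi⟩ a b := by
    intro i
    induction i using Nat.strong_induction_on with
    | _ i IH =>
      intro hi a b
      by_cases hP : 2 ≤ i ∧ b = b0
      · obtain ⟨h2i, hbb⟩ := hP
        subst hbb
        have hprlt : i - 1 < d := by omega
        have hfg : ∀ q : Fin d × Fin n, q ≠ ((⟨0, hd⟩ : Fin d), b) →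
            toep nb n (seq H1 ω) d (⟨i-1, hprlt⟩, a) q * flat c q
              - toep nb n (seq H1 ω') d (⟨i-1, hprlt⟩, a) q * flat c q = 0 := by
          rintro ⟨j, b'⟩ hq
          simp only [toep]
          by_cases hj : (j:ℕ) ≤ ((⟨i-1, hprlt⟩ : Fin d):ℕ)
          · rw [if_pos hj, if_pos hj]
            have hjle : (j:ℕ) ≤ i - 1 := hj
            have hτ : ((⟨i-1, hprlt⟩ : Fin d):ℕ) - (j:ℕ) + 1 = i - (j:ℕ) := by
              show (i-1) - (j:ℕ) + 1 = i - (j:ℕ); omega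
            rcases Nat.eq_or_lt_of_le (show 1 ≤ i - (j:ℕ) by omega) with h1 | h1
            · rw [hτ, seq, seq, if_pos h1.symm, if_pos h1.symm]; ring
            · have hτd : i - (j:ℕ) < d + 1 := by omega
              rw [hτ, seq, seq, if_neg (by omega), dif_pos hτd, if_neg (by omega),
                dif_pos hτd]
              by_cases hj0 : (j:ℕ) = 0
              · have hb' : b' ≠ b := by
                  intro hb'; apply hq
                  exact Prod.ext (Fin.ext hj0) hb'
                rw [hagree _ a b' (by simp [hb'])]; ring
              · have : i - (j:ℕ) < i := by omega
                rw [IH (i - (j:ℕ)) this hτd a b']; ring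
          · rw [if_neg hj, if_neg hj]; ring
        have hsf : ∑ q : Fin d × Fin n,
            toep nb n (seq H1 ω) d (⟨i-1, hprlt⟩, a) q * flat c q = 0 := by
          have := congrFun hE (⟨⟨i-1, hprlt⟩, a⟩)
          simpa [Matrix.mulVec, dotProduct] using this
        have hsg : ∑ q : Fin d × Fin n,
            toep nb n (seq H1 ω') d (⟨i-1, hprlt⟩, a) q * flat c q = 0 := by
          have := congrFun hE' (⟨⟨i-1, hprlt⟩, a⟩)
          simpa [Matrix.mulVec, dotProduct] using this
        have hkey : toep nb n (seq H1 ω) d (⟨i-1, hprlt⟩, a) (⟨0, hd⟩, b) * flat c (⟨0, hd⟩, b)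
            - toep nb n (seq H1 ω') d (⟨i-1, hprlt⟩, a) (⟨0, hd⟩, b) * flat c (⟨0, hd⟩, b) = 0 := by
          have hz : ∑ q : Fin d × Fin n,
              (toep nb n (seq H1 ω) d (⟨i-1, hprlt⟩, a) q * flat c q
                - toep nb n (seq H1 ω') d (⟨i-1, hprlt⟩, a) q * flat c q) = 0 := by
            rw [Finset.sum_sub_distrib, hsf, hsg, sub_zero]
          rw [← Finset.sum_eq_single ((⟨0, hd⟩ : Fin d), b) (fun q _ hq => hfg q hq)
            (fun h => absurd (Finset.mem_univ _) h), hz]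
        have hred : ∀ (ρ : Fin (d+1) → Matrix (Fin nb) (Fin n) (ZMod 2)),
            toep nb n (seq H1 ρ) d (⟨i-1, hprlt⟩, a) (⟨0, hd⟩, b) * flat c (⟨0, hd⟩, b)
              = ρ ⟨i, hi⟩ a b := by
          intro ρ
          have h0 : ((⟨0, hd⟩ : Fin d):ℕ) ≤ ((⟨i-1, hprlt⟩ : Fin d):ℕ) := by
            show 0 ≤ i - 1; omega
          simp only [toep, if_pos h0, flat]
          have hτ : ((⟨i-1, hprlt⟩ : Fin d):ℕ) - ((⟨0, hd⟩ : Fin d):ℕ) + 1 = i := by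
            show (i-1) - 0 + 1 = i; omega
          rw [hτ, seq, if_neg (by omega), dif_pos hi]
          rw [hb0, mul_one]
        rw [hred ω, hred ω'] at hkey
        exact sub_eq_zero.mp hkey
      · exact hagree _ a b hP
  funext i a b
  have := main i.val i.isLt a b
  simpa using this

set_option maxHeartbeats 2000000 in
theorem toeplitz_fixed_codeword_prob
    (k n : ℕ) (hk : 0 < k) (hkn : k < n)
    (p : ℝ) (hp0 : 0 < p) (hp : p ≤ 1 / 2)
    (d : ℕ) (hd : 0 < d)
    (H1 : Matrix (Fin (n - k)) (Fin n) (ZMod 2))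
    (c : Fin d → Fin n → ZMod 2) (hc : c ⟨0, hd⟩ ≠ 0) :
    prOmega p d (fun ω =>
        Matrix.mulVec (toep (n - k) n (seq H1 ω) d) (flat c) = 0)
      ≤ (1 - p) ^ ((n - k) * (d - 1)) := by
  classical
  obtain ⟨b0, hb0'⟩ : ∃ b, c ⟨0, hd⟩ b ≠ 0 := by
    by_contra h; push_neg at h; exact hc (funext h)
  have hz1 : ∀ x : ZMod 2, x ≠ 0 → x = 1 := by decide
  have hb0 : c ⟨0, hd⟩ b0 = 1 := hz1 _ hb0'
  set P : Fin (d+1) × Fin (n - k) × Fin n → Prop :=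
    fun t => 2 ≤ (t.1:ℕ) ∧ t.2.2 = b0 with hPdef
  set E : (Fin (d+1) → Matrix (Fin (n - k)) (Fin n) (ZMod 2)) → Prop :=
    fun ω => Matrix.mulVec (toep (n - k) n (seq H1 ω) d) (flat c) = 0 with hEdef
  have hw0 : ∀ x, 0 ≤ wBit p x := by
    intro x; unfold wBit; split <;> linarith
  have hw1 : ∀ x, wBit p x ≤ 1 - p := by
    intro x; unfold wBit; split <;> linarith
  set eqv := (flatOmega (D := d+1) (nb := n - k) (n := n)).trans
    (Equiv.piEquivPiSubtypeProd P fun _ => ZMod 2) with heqv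
  set N := Fintype.card {t : Fin (d+1) × Fin (n - k) × Fin n // P t} with hNdef
  -- cardinality of the set of "determined" coordinates
  have hcard : N = (n - k) * (d - 1) := by
    rw [hNdef, Fintype.card_subtype]
    have hsplit : Finset.univ.filter P
        = (Finset.univ.filter fun i : Fin (d+1) => 2 ≤ (i:ℕ)) ×ˢ
          ((Finset.univ : Finset (Fin (n - k))) ×ˢ ({b0} : Finset (Fin n))) := by
      ext ⟨i, a, b⟩
      simp only [Finset.mem_filter, Finset.mem_product, Finset.mem_univ,
        Finset.mem_singleton, true_and, hPdef]
    have hfilt : (Finset.univ.filter fun i : Fin (d+1) => 2 ≤ (i:ℕ)).card = d - 1 := by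
      have hneg : (Finset.univ.filter fun i : Fin (d+1) => ¬ 2 ≤ (i:ℕ))
          = {⟨0, by omega⟩, ⟨1, by omega⟩} := by
        ext i
        simp only [Finset.mem_filter, Finset.mem_univ, true_and, Finset.mem_insert,
          Finset.mem_singleton, Fin.ext_iff]
        omega
      have htot := Finset.card_filter_add_card_filter_not
        (s := (Finset.univ : Finset (Fin (d+1)))) (p := fun i : Fin (d+1) => 2 ≤ (i:ℕ))
      rw [hneg] at htot
      have h2 : ({⟨0, by omega⟩, ⟨1, by omega⟩} : Finset (Fin (d+1))).card = 2 := by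
        rw [Finset.card_insert_of_notMem (by simp [Fin.ext_iff]), Finset.card_singleton]
      rw [h2, Finset.card_univ, Fintype.card_fin] at htot
      omega
    rw [hsplit, Finset.card_product, Finset.card_product, Finset.card_singleton,
      Finset.card_univ, Fintype.card_fin, hfilt]
    ring
  -- reconstruction facts
  have hrecon : ∀ (v : {t // P t} → ZMod 2) (u : {t // ¬ P t} → ZMod 2)
      (t : Fin (d+1) × Fin (n - k) × Fin n),
      (eqv.symm (v, u)) t.1 t.2.1 t.2.2
        = if h : P t then v ⟨t, h⟩ else u ⟨t, h⟩ := by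
    intro v u t
    rfl
  -- the weight splits
  have hsplitW : ∀ (v : {t // P t} → ZMod 2) (u : {t // ¬ P t} → ZMod 2),
      tupWt p (eqv.symm (v, u))
        = (∏ t : {t // P t}, wBit p (v t)) * ∏ t : {t // ¬ P t}, wBit p (u t) := by
    intro v u
    rw [tupWt_eq, ← Fintype.prod_subtype_mul_prod_subtype P
      (fun t => wBit p ((eqv.symm (v, u)) t.1 t.2.1 t.2.2))]
    congr 1
    · refine Finset.prod_congr rfl fun t _ => ?_
      rw [hrecon, dif_pos t.2]
    · refine Finset.prod_congr rfl fun t _ => ?_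
      rw [hrecon, dif_neg t.2]
  -- the sum over the sample space, reindexed
  have hpr : prOmega p d E
      = ∑ u : {t // ¬ P t} → ZMod 2, ∑ v : {t // P t} → ZMod 2,
          if E (eqv.symm (v, u)) then tupWt p (eqv.symm (v, u)) else 0 := by
    have h0 : prOmega p d E
        = ∑ ω : Fin (d+1) → Matrix (Fin (n - k)) (Fin n) (ZMod 2),
            if E ω then tupWt p ω else 0 := by
      unfold prOmega
      exact Finset.sum_congr rfl fun ω _ => by congr
    rw [h0, ← Equiv.sum_comp eqv.symm (fun ω => if E ω then tupWt p ω else 0),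
      Fintype.sum_prod_type_right]
  rw [hpr]
  -- per-u bound
  have hperu : ∀ u : {t // ¬ P t} → ZMod 2,
      (∑ v : {t // P t} → ZMod 2,
          if E (eqv.symm (v, u)) then tupWt p (eqv.symm (v, u)) else 0)
        ≤ (1 - p) ^ N * ∏ t : {t // ¬ P t}, wBit p (u t) := by
    intro u
    have hrn : (0:ℝ) ≤ ∏ t : {t // ¬ P t}, wBit p (u t) :=
      Finset.prod_nonneg fun t _ => hw0 _
    have hdetbd : ∀ v : {t // P t} → ZMod 2,
        (∏ t : {t // P t}, wBit p (v t)) ≤ (1 - p) ^ N := by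
      intro v
      calc ∏ t : {t // P t}, wBit p (v t)
          ≤ ∏ _t : {t // P t}, (1 - p) :=
            Finset.prod_le_prod (fun t _ => hw0 _) (fun t _ => hw1 _)
        _ = (1 - p) ^ N := by rw [Finset.prod_const, Finset.card_univ]
    by_cases hex : ∃ v : {t // P t} → ZMod 2, E (eqv.symm (v, u))
    · obtain ⟨v₀, hv₀⟩ := hex
      have huniq : ∀ v : {t // P t} → ZMod 2, E (eqv.symm (v, u)) → v = v₀ := by
        intro v hv
        have hagree : ∀ i : Fin (d+1), ∀ a : Fin (n - k), ∀ b : Fin n,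
            ¬(2 ≤ (i:ℕ) ∧ b = b0) →
              (eqv.symm (v, u)) i a b = (eqv.symm (v₀, u)) i a b := by
          intro i a b hb
          have h1 := hrecon v u (i, a, b)
          have h2 := hrecon v₀ u (i, a, b)
          simp only at h1 h2
          rw [h1, h2, dif_neg hb, dif_neg hb]
        have heq := key_unique hd H1 c b0 hb0 (eqv.symm (v, u)) (eqv.symm (v₀, u))
          hagree hv hv₀
        have := eqv.symm.injective heq
        exact ((Prod.mk.injEq _ _ _ _).mp this).1
      have hsum : (∑ v : {t // P t} → ZMod 2,
          if E (eqv.symm (v, u)) then tupWt p (eqv.symm (v, u)) else 0)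
          = if E (eqv.symm (v₀, u)) then tupWt p (eqv.symm (v₀, u)) else 0 := by
        refine Finset.sum_eq_single v₀ (fun v _ hv => ?_)
          (fun h => absurd (Finset.mem_univ _) h)
        rw [if_neg fun hE' => hv (huniq v hE')]
      rw [hsum, if_pos hv₀, hsplitW v₀ u]
      exact mul_le_mul_of_nonneg_right (hdetbd v₀) hrn
    · push_neg at hex
      have hsum : (∑ v : {t // P t} → ZMod 2,
          if E (eqv.symm (v, u)) then tupWt p (eqv.symm (v, u)) else 0) = 0 := by
        refine Finset.sum_eq_zero fun v _ => ?_
        rw [if_neg (hex v)]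
      rw [hsum]
      exact mul_nonneg (pow_nonneg (by linarith) _) hrn
  calc (∑ u : {t // ¬ P t} → ZMod 2, ∑ v : {t // P t} → ZMod 2,
        if E (eqv.symm (v, u)) then tupWt p (eqv.symm (v, u)) else 0)
      ≤ ∑ u : {t // ¬ P t} → ZMod 2,
          (1 - p) ^ N * ∏ t : {t // ¬ P t}, wBit p (u t) :=
        Finset.sum_le_sum fun u _ => hperu u
    _ = (1 - p) ^ N * ∑ u : {t // ¬ P t} → ZMod 2, ∏ t, wBit p (u t) := by
        rw [Finset.mul_sum]
    _ = (1 - p) ^ N := by rw [sum_fun_wBit, mul_one]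
    _ = (1 - p) ^ ((n - k) * (d - 1)) := by rw [hcard]
end

section
/- Fix 0 < p ≤ 1/2, α ∈ (0,1/2], an integer d ≥ 1, a fixed H₁ ∈ F₂^{n̄×n}, and let the entries of H₂,…,H_d be i.i.d. Bernoulli(p). Then P(minW(d) < αnd), i.e., the probability that there exists c ∈ C_d with ‖c‖ < αnd, is at most (1−p)^{−n̄} · 2^{−nd·((1−R)·log₂(1/(1−p)) − H(α))}. -/
/-!
STATEMENT 5: With `H₂,…,H_d` i.i.d. Bernoulli(p), `0 < p ≤ 1/2`, and `α ∈ (0,1/2]`,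
the probability that some `c ∈ C_d` has `‖c‖ < αnd` (i.e. `minW(d) < αnd`) is at most
`(1−p)^{−n̄} · 2^{−nd((1−R)log₂(1/(1−p)) − H(α))}` where `R = k/n`.
-/

open scoped BigOperators

/-!
Union bound over the block vectors `c` with `c₁ ≠ 0` and `‖c‖ < αnd`. For such a `c` and each
`τ = 2, …, d`, block row `τ - 1` of `𝐇_d c = 0` reads `H_τ c₁ = v` with `v` a function of
`H₁, …, H_{τ-1}` only. Given the earlier blocks, a Bernoulli(p) matrix `M` satisfies `M c₁ = v` with
probability at most `(1-p)^{n̄}`: in each row, resample an entry where `c₁` is nonzero; exactly one of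
its two values works, and each value has probability at most `1 - p`. Peeling off `τ = d, …, 2`
bounds the probability for one `c` by `(1-p)^{n̄(d-1)}`. There are at most `2^{nd H(α)}` such `c`,
because each has Bernoulli(α) product weight at least `2^{-nd H(α)}` when `α ≤ 1/2`, and these
weights sum to `1`. Finally, `2^{nd H(α)} (1-p)^{n̄(d-1)}` is exactly the stated bound.
-/

open Finset Function Matrix

section ProductWeight

variable {ι X : Type*} [Fintype ι] [DecidableEq ι] [Fintype X] {w : X → ℝ}

theorem sum_prod_eq_one (hw : ∑ x, w x = 1) : ∑ ω : ι → X, ∏ i, w (ω i) = 1 := by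
  rw [← Fintype.prod_sum (fun _ => w), hw, prod_const_one]

theorem sum_ite_forall_prod (E : ι → X → Prop) [∀ i, DecidablePred (E i)] :
    ∑ ω : ι → X, (if ∀ i, E i (ω i) then ∏ i, w (ω i) else 0) =
      ∏ i, ∑ x, if E i x then w x else 0 := by
  rw [Fintype.prod_sum]
  exact sum_congr rfl fun ω _ => Fintype.prod_ite_zero.symm

omit [Fintype X] in
theorem prod_update_mul (ω : ι → X) (a : ι) (x : X) :
    (∏ i, w (update ω a x i)) * w (ω a) = (∏ i, w (ω i)) * w x := by
  rw [Fintype.prod_eq_mul_prod_compl a, Fintype.prod_eq_mul_prod_compl a (fun i => w (ω i)),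
    update_self, prod_congr rfl fun i hi => by rw [update_of_ne (by simpa using hi)]]
  ring

theorem sum_prod_mul_eq_sum_update (hw : ∑ x, w x = 1) (a : ι) (F : (ι → X) → ℝ) :
    ∑ ω, (∏ i, w (ω i)) * F ω = ∑ ω, (∏ i, w (ω i)) * ∑ x, w x * F (update ω a x) := by
  have hσ : Involutive fun q : (ι → X) × X => (update q.1 a q.2, q.1 a) := fun q => by simp
  symm
  calc ∑ ω, (∏ i, w (ω i)) * ∑ x, w x * F (update ω a x)
      = ∑ q : (ι → X) × X, (∏ i, w (q.1 i)) * w q.2 * F (update q.1 a q.2) := by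
        simp only [mul_sum, Fintype.sum_prod_type, mul_assoc]
    _ = ∑ q : (ι → X) × X, (∏ i, w (update q.1 a q.2 i)) * w (q.1 a) * F q.1 := by
        refine Fintype.sum_bijective _ hσ.bijective _ _ fun q => ?_
        simp only [update_idem, update_eq_self, update_self]
    _ = ∑ q : (ι → X) × X, (∏ i, w (q.1 i)) * w q.2 * F q.1 := by simp only [prod_update_mul]
    _ = ∑ ω, (∏ i, w (ω i)) * F ω := by
        simp only [Fintype.sum_prod_type, mul_right_comm _ (w _), ← mul_sum, hw, mul_one]

open scoped Classical in
theorem sum_ite_and_prod_le_mul (hw0 : ∀ x, 0 ≤ w x) (hw1 : ∑ x, w x = 1) {q : ℝ} (a : ι)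
    (A P : (ι → X) → Prop) (hP : ∀ ω x, P (update ω a x) ↔ P ω)
    (hA : ∀ ω, ∑ x, (if A (update ω a x) then w x else 0) ≤ q) :
    ∑ ω, (if A ω ∧ P ω then ∏ i, w (ω i) else 0)
      ≤ q * ∑ ω, (if P ω then ∏ i, w (ω i) else 0) := by
  have hinner : ∀ ω, ∑ x, w x * (if A (update ω a x) ∧ P (update ω a x) then 1 else 0)
      ≤ if P ω then q else 0 := fun ω => by
    by_cases hω : P ω
    · simpa only [hP, hω, and_true, if_true, mul_ite, mul_one, mul_zero] using hA ω
    · simp only [hP, hω, and_false, if_false, mul_zero, sum_const_zero, le_refl]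
  calc ∑ ω, (if A ω ∧ P ω then ∏ i, w (ω i) else 0)
      = ∑ ω, (∏ i, w (ω i)) * (if A ω ∧ P ω then 1 else 0) := by
        simp only [mul_ite, mul_one, mul_zero]
    _ = ∑ ω, (∏ i, w (ω i)) *
          ∑ x, w x * (if A (update ω a x) ∧ P (update ω a x) then 1 else 0) :=
        sum_prod_mul_eq_sum_update hw1 a _
    _ ≤ ∑ ω, (∏ i, w (ω i)) * (if P ω then q else 0) :=
        sum_le_sum fun ω _ => mul_le_mul_of_nonneg_left (hinner ω) (prod_nonneg fun i _ => hw0 _)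
    _ = q * ∑ ω, (if P ω then ∏ i, w (ω i) else 0) := by
        rw [mul_sum]
        exact sum_congr rfl fun ω _ => by split_ifs <;> ring

open scoped Classical in
theorem sum_ite_forall_prod_le_pow [LinearOrder ι] (hw0 : ∀ x, 0 ≤ w x) (hw1 : ∑ x, w x = 1)
    {q : ℝ} (T : Finset ι) (A : ι → (ι → X) → Prop)
    (hA : ∀ σ ∈ T, ∀ τ ∈ T, σ < τ → ∀ ω x, (A σ (update ω τ x) ↔ A σ ω))
    (hq : ∀ τ ∈ T, ∀ ω, ∑ x, (if A τ (update ω τ x) then w x else 0) ≤ q) :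
    ∑ ω, (if ∀ τ ∈ T, A τ ω then ∏ i, w (ω i) else 0) ≤ q ^ #T := by
  induction T using Finset.induction_on_max with
  | empty => simp [sum_prod_eq_one hw1]
  | insert a s has ih =>
    have ha : a ∈ insert a s := mem_insert_self a s
    have hq0 : 0 ≤ q := by
      obtain ⟨x₀, -⟩ := nonempty_of_sum_ne_zero (hw1.trans_ne one_ne_zero)
      exact (sum_nonneg fun x _ => by split_ifs <;> simp [hw0]).trans (hq a ha fun _ => x₀)
    simp only [forall_mem_insert]
    calc _ ≤ q * ∑ ω, (if ∀ τ ∈ s, A τ ω then ∏ i, w (ω i) else 0) := by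
          convert sum_ite_and_prod_le_mul hw0 hw1 a (A a) (fun ω => ∀ τ ∈ s, A τ ω)
            (fun ω x => forall₂_congr fun τ hτ => hA τ (mem_insert_of_mem hτ) a ha (has τ hτ) ω x)
            (hq a ha)
      _ ≤ q * q ^ #s := mul_le_mul_of_nonneg_left (ih (fun σ hσ τ hτ =>
            hA σ (mem_insert_of_mem hσ) τ (mem_insert_of_mem hτ))
            fun τ hτ => hq τ (mem_insert_of_mem hτ)) hq0
      _ = q ^ #(insert a s) := by
          rw [card_insert_of_notMem fun h => lt_irrefl a (has a h), pow_succ']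

end ProductWeight

section Bernoulli

variable {ι : Type*} [Fintype ι] {p : ℝ}

def bernWt (p : ℝ) (z : ZMod 2) : ℝ := if z = 1 then p else 1 - p

theorem sum_bernWt (p : ℝ) : ∑ z, bernWt p z = 1 := by
  rw [show (univ : Finset (ZMod 2)) = {0, 1} by decide, sum_pair (by decide)]
  simp only [bernWt, if_true, if_neg (show (0 : ZMod 2) ≠ 1 by decide)]
  ring

theorem bernWt_nonneg (hp0 : 0 ≤ p) (hp1 : p ≤ 1) (z : ZMod 2) : 0 ≤ bernWt p z := by
  unfold bernWt; split_ifs <;> linarith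

theorem bernWt_le (hp : p ≤ 1 / 2) (z : ZMod 2) : bernWt p z ≤ 1 - p := by
  unfold bernWt; split_ifs <;> linarith

theorem prod_bernWt_eq (v : ι → ZMod 2) :
    ∏ i, bernWt p (v i) = p ^ hammingNorm v * (1 - p) ^ (Fintype.card ι - hammingNorm v) := by
  have h1 : ∀ z : ZMod 2, z = 1 ↔ z ≠ 0 := by decide
  have hcard := card_filter_add_card_filter_not (s := univ) fun i => v i ≠ 0
  rw [card_univ] at hcard
  rw [show hammingNorm v = #{i | v i ≠ 0} from rfl, ← hcard, Nat.add_sub_cancel_left]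
  simp only [bernWt, h1, prod_ite, prod_const]

theorem sum_ite_dotProduct_eq_le [DecidableEq ι] (hp0 : 0 ≤ p) (hp : p ≤ 1 / 2)
    {x : ι → ZMod 2} (hx : x ≠ 0) (t : ZMod 2) :
    ∑ r : ι → ZMod 2, (if r ⬝ᵥ x = t then ∏ i, bernWt p (r i) else 0) ≤ 1 - p := by
  obtain ⟨b, hb⟩ := Function.ne_iff.mp hx
  have hxb : x b = 1 := (by decide : ∀ z : ZMod 2, z ≠ 0 → z = 1) _ hb
  have hdot : ∀ r y, update r b y ⬝ᵥ x = (r ⬝ᵥ x - r b) + y := fun r y => by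
    rw [Pi.update_eq_sub_add_single b r y]
    simp only [add_dotProduct, sub_dotProduct, single_dotProduct, hxb, mul_one]
  have hres : ∀ r, ∑ y, bernWt p y * (if update r b y ⬝ᵥ x = t then 1 else 0) ≤ 1 - p := by
    intro r
    simp only [hdot, mul_ite, mul_one, mul_zero, ← eq_sub_iff_add_eq', sum_ite_eq', mem_univ,
      if_true]
    exact bernWt_le hp _
  have hw0 : ∀ r : ι → ZMod 2, 0 ≤ ∏ i, bernWt p (r i) :=
    fun r => prod_nonneg fun i _ => bernWt_nonneg hp0 (by linarith) _
  calc ∑ r, (if r ⬝ᵥ x = t then ∏ i, bernWt p (r i) else 0)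
      = ∑ r, (∏ i, bernWt p (r i)) * (if r ⬝ᵥ x = t then 1 else 0) := by
        simp only [mul_ite, mul_one, mul_zero]
    _ = ∑ r, (∏ i, bernWt p (r i)) *
          ∑ y, bernWt p y * (if update r b y ⬝ᵥ x = t then 1 else 0) :=
        sum_prod_mul_eq_sum_update (sum_bernWt p) b _
    _ ≤ ∑ r, (∏ i, bernWt p (r i)) * (1 - p) :=
        sum_le_sum fun r _ => mul_le_mul_of_nonneg_left (hres r) (hw0 r)
    _ = 1 - p := by rw [← sum_mul, sum_prod_eq_one (sum_bernWt p), one_mul]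

theorem sum_ite_mulVec_eq_le {nb n : ℕ} (hp0 : 0 ≤ p) (hp : p ≤ 1 / 2)
    {x : Fin n → ZMod 2} (hx : x ≠ 0) (t : Fin nb → ZMod 2) :
    ∑ M : Matrix (Fin nb) (Fin n) (ZMod 2), (if M *ᵥ x = t then matWt p M else 0)
      ≤ (1 - p) ^ nb := by
  have hrows : ∀ M : Matrix (Fin nb) (Fin n) (ZMod 2), M *ᵥ x = t ↔ ∀ a, M a ⬝ᵥ x = t a :=
    fun M => funext_iff
  calc ∑ M : Matrix (Fin nb) (Fin n) (ZMod 2), (if M *ᵥ x = t then matWt p M else 0)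
      = ∑ M : Fin nb → Fin n → ZMod 2,
          (if ∀ a, M a ⬝ᵥ x = t a then ∏ a, ∏ b, bernWt p (M a b) else 0) :=
        sum_congr rfl fun M _ => if_congr (hrows M) rfl rfl
    _ = ∏ a, ∑ r : Fin n → ZMod 2, (if r ⬝ᵥ x = t a then ∏ b, bernWt p (r b) else 0) := by
        convert sum_ite_forall_prod (w := fun r : Fin n → ZMod 2 => ∏ b, bernWt p (r b))
          (fun a r => r ⬝ᵥ x = t a)
    _ ≤ ∏ _a : Fin nb, (1 - p) :=
        prod_le_prod (fun a _ => sum_nonneg fun r _ => by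
          split_ifs
          exacts [prod_nonneg fun i _ => bernWt_nonneg hp0 (by linarith) _, le_rfl])
          fun a _ => sum_ite_dotProduct_eq_le hp0 hp hx (t a)
    _ = (1 - p) ^ nb := by rw [prod_const, card_univ, Fintype.card_fin]

end Bernoulli

theorem card_hammingBall_le {ι : Type*} [Fintype ι] [DecidableEq ι] {α : ℝ} (hα0 : 0 < α)
    (hα : α ≤ 1 / 2) :
    (#{v : ι → ZMod 2 | (hammingNorm v : ℝ) ≤ α * Fintype.card ι} : ℝ)
      ≤ 2 ^ (Fintype.card ι * binH α) := by
  set N := Fintype.card ι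
  have h1α : 0 < 1 - α := by linarith
  have hlog : Real.logb 2 α ≤ Real.logb 2 (1 - α) :=
    Real.logb_le_logb_of_le one_lt_two hα0 (by linarith)
  have hlow : ∀ v : ι → ZMod 2, (hammingNorm v : ℝ) ≤ α * N →
      (2 : ℝ) ^ (-(N * binH α)) ≤ ∏ i, bernWt α (v i) := by
    intro v hv
    have hwN : hammingNorm v ≤ N := (card_filter_le _ _).trans_eq card_univ
    rw [prod_bernWt_eq, ← Real.le_logb_iff_rpow_le one_lt_two
      (mul_pos (pow_pos hα0 _) (pow_pos h1α _)), Real.logb_mul (pow_ne_zero _ hα0.ne')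
      (pow_ne_zero _ h1α.ne'), Real.logb_pow, Real.logb_pow, Nat.cast_sub hwN, binH]
    nlinarith [mul_nonneg (sub_nonneg.2 hv) (sub_nonneg.2 hlog)]
  have hsum : (#{v : ι → ZMod 2 | (hammingNorm v : ℝ) ≤ α * N} : ℝ) * 2 ^ (-(N * binH α)) ≤ 1 :=
    calc _ = ∑ v ∈ {v : ι → ZMod 2 | (hammingNorm v : ℝ) ≤ α * N}, (2 : ℝ) ^ (-(N * binH α)) := by
          rw [sum_const, nsmul_eq_mul]
      _ ≤ ∑ v ∈ {v : ι → ZMod 2 | (hammingNorm v : ℝ) ≤ α * N}, ∏ i, bernWt α (v i) :=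
          sum_le_sum fun v hv => hlow v (mem_filter.1 hv).2
      _ ≤ ∑ v : ι → ZMod 2, ∏ i, bernWt α (v i) :=
          sum_le_sum_of_subset_of_nonneg (subset_univ _) fun v _ _ =>
            prod_nonneg fun i _ => bernWt_nonneg hα0.le (by linarith) _
      _ = 1 := sum_prod_eq_one (sum_bernWt α)
  rwa [Real.rpow_neg zero_le_two, ← div_eq_mul_inv, div_le_one (by positivity)] at hsum

theorem card_wt_lt_le {d n : ℕ} {α : ℝ} (hα0 : 0 < α) (hα : α ≤ 1 / 2) :
    (#{c : Fin d → Fin n → ZMod 2 | (wt c : ℝ) < α * n * d} : ℝ)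
      ≤ 2 ^ (((n * d : ℕ) : ℝ) * binH α) := by
  have hcard : Fintype.card (Fin d × Fin n) = n * d := by simp [mul_comm]
  have hinj : Injective (flat (d := d) (n := n)) := fun c c' h =>
    funext fun i => funext fun b => congrFun h (i, b)
  refine le_trans ?_ (hcard ▸ card_hammingBall_le hα0 hα)
  refine Nat.cast_le.2 (card_le_card_of_injOn flat (fun c hc => ?_) hinj.injOn)
  simp only [coe_filter, mem_univ, true_and, Set.mem_ofPred_eq] at hc ⊢
  rw [show hammingNorm (flat c) = wt c from rfl]
  push_cast
  rw [← mul_assoc]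
  exact hc.le

section Toeplitz

variable {nb n d : ℕ}

def blockRow (H : ℕ → Matrix (Fin nb) (Fin n) (ZMod 2)) (c : Fin d → Fin n → ZMod 2) (i : ℕ) :
    Fin nb → ZMod 2 :=
  ∑ j : Fin d, if (j : ℕ) ≤ i then H (i - j + 1) *ᵥ c j else 0

theorem toep_mulVec_flat (H : ℕ → Matrix (Fin nb) (Fin n) (ZMod 2)) (c : Fin d → Fin n → ZMod 2) :
    toep nb n H d *ᵥ flat c = fun q => blockRow H c q.1 q.2 := by
  ext ⟨i, a⟩
  simp only [mulVec, dotProduct, Fintype.sum_prod_type, toep, flat, blockRow, Finset.sum_apply]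
  refine sum_congr rfl fun j _ => ?_
  split_ifs <;> simp [mulVec, dotProduct]

theorem toep_mulVec_flat_eq_zero_iff (H : ℕ → Matrix (Fin nb) (Fin n) (ZMod 2))
    (c : Fin d → Fin n → ZMod 2) :
    toep nb n H d *ᵥ flat c = 0 ↔ ∀ i : Fin d, blockRow H c i = 0 := by
  simp only [toep_mulVec_flat, funext_iff, Prod.forall, Pi.zero_apply]

theorem blockRow_congr {H H' : ℕ → Matrix (Fin nb) (Fin n) (ZMod 2)} (c : Fin d → Fin n → ZMod 2)
    {i : ℕ} (h : ∀ m ≤ i + 1, H m = H' m) : blockRow H c i = blockRow H' c i :=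
  sum_congr rfl fun j _ => by
    split_ifs
    · rw [h (i - j + 1) (by omega)]
    · rfl

theorem blockRow_eq_add (hd : 0 < d) (H : ℕ → Matrix (Fin nb) (Fin n) (ZMod 2))
    (c : Fin d → Fin n → ZMod 2) (i : ℕ) :
    blockRow H c i = H (i + 1) *ᵥ c ⟨0, hd⟩ +
      ∑ j ∈ (univ : Finset (Fin d)).erase ⟨0, hd⟩,
        if (j : ℕ) ≤ i then H (i - j + 1) *ᵥ c j else 0 := by
  rw [blockRow, ← add_sum_erase _ _ (mem_univ ⟨0, hd⟩), if_pos (Nat.zero_le i), Nat.sub_zero]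

variable {D : ℕ} (H1 : Matrix (Fin nb) (Fin n) (ZMod 2))
  (ω : Fin (D + 1) → Matrix (Fin nb) (Fin n) (ZMod 2)) (τ : Fin (D + 1))
  (M : Matrix (Fin nb) (Fin n) (ZMod 2))

theorem seq_update_of_ne {m : ℕ} (hm : m ≠ τ) : seq H1 (update ω τ M) m = seq H1 ω m := by
  unfold seq
  split_ifs with h1 h2
  · rfl
  · exact update_of_ne (fun h => hm (congrArg Fin.val h)) _ _
  · rfl

theorem seq_update_self (hτ : 2 ≤ (τ : ℕ)) : seq H1 (update ω τ M) τ = M := by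
  rw [seq, if_neg (by omega), dif_pos τ.isLt]
  simp

theorem blockRow_seq_update_of_lt (c : Fin d → Fin n → ZMod 2) {σ : Fin (D + 1)}
    (hσ : 1 ≤ (σ : ℕ)) (hστ : σ < τ) :
    blockRow (seq H1 (update ω τ M)) c (σ - 1) = blockRow (seq H1 ω) c (σ - 1) :=
  blockRow_congr c fun m hm => seq_update_of_ne H1 ω τ M <| by
    have : (σ : ℕ) < τ := hστ
    omega

theorem blockRow_seq_update_eq_zero_iff (hd : 0 < d) (c : Fin d → Fin n → ZMod 2)
    (hτ : 2 ≤ (τ : ℕ)) :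
    blockRow (seq H1 (update ω τ M)) c (τ - 1) = 0 ↔
      M *ᵥ c ⟨0, hd⟩ = ∑ j ∈ (univ : Finset (Fin d)).erase ⟨0, hd⟩,
        if (j : ℕ) ≤ τ - 1 then seq H1 ω (τ - 1 - j + 1) *ᵥ c j else 0 := by
  have htail : ∀ j ∈ (univ : Finset (Fin d)).erase ⟨0, hd⟩,
      (if (j : ℕ) ≤ τ - 1 then seq H1 (update ω τ M) (τ - 1 - j + 1) *ᵥ c j else 0) =
        if (j : ℕ) ≤ τ - 1 then seq H1 ω (τ - 1 - j + 1) *ᵥ c j else 0 := fun j hj => by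
    have hj0 : (j : ℕ) ≠ 0 := fun h => ne_of_mem_erase hj (Fin.ext h)
    split_ifs
    · rw [seq_update_of_ne H1 ω τ M (by omega)]
    · rfl
  rw [blockRow_eq_add hd, Nat.sub_add_cancel (by omega : 1 ≤ (τ : ℕ)),
    seq_update_self H1 ω τ M hτ, sum_congr rfl htail, add_eq_zero_iff_eq_neg,
    show ∀ v : Fin nb → ZMod 2, -v = v from fun v => funext fun _ => ZMod.neg_eq_self_mod_two _]

end Toeplitz

section Ensemble

variable {p : ℝ} {nb n D : ℕ}

theorem matWt_nonneg (hp0 : 0 ≤ p) (hp1 : p ≤ 1) (M : Matrix (Fin nb) (Fin n) (ZMod 2)) :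
    0 ≤ matWt p M :=
  prod_nonneg fun _ _ => prod_nonneg fun _ _ => bernWt_nonneg hp0 hp1 _

theorem sum_matWt (p : ℝ) : ∑ M : Matrix (Fin nb) (Fin n) (ZMod 2), matWt p M = 1 :=
  sum_prod_eq_one (w := fun r : Fin n → ZMod 2 => ∏ b, bernWt p (r b))
    (sum_prod_eq_one (sum_bernWt p))

theorem prOmega_mono (hp0 : 0 ≤ p) (hp1 : p ≤ 1)
    {S S' : (Fin (D + 1) → Matrix (Fin nb) (Fin n) (ZMod 2)) → Prop} (h : ∀ ω, S ω → S' ω) :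
    prOmega p D S ≤ prOmega p D S' :=
  sum_le_sum fun ω _ => by
    split_ifs with hS hS'
    exacts [le_rfl, absurd (h ω hS) hS', prod_nonneg fun _ _ => matWt_nonneg hp0 hp1 _, le_rfl]

theorem prOmega_le_sum (hp0 : 0 ≤ p) (hp1 : p ≤ 1) {κ : Type*} (B : Finset κ)
    {S : (Fin (D + 1) → Matrix (Fin nb) (Fin n) (ZMod 2)) → Prop}
    (E : κ → (Fin (D + 1) → Matrix (Fin nb) (Fin n) (ZMod 2)) → Prop)
    (h : ∀ ω, S ω → ∃ c ∈ B, E c ω) :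
    prOmega p D S ≤ ∑ c ∈ B, prOmega p D (E c) := by
  classical
  unfold prOmega
  rw [sum_comm]
  refine sum_le_sum fun ω _ => ?_
  have hterm : ∀ c, 0 ≤ if E c ω then tupWt p ω else 0 := fun c => by
    split_ifs
    exacts [prod_nonneg fun _ _ => matWt_nonneg hp0 hp1 _, le_rfl]
  split_ifs with hS
  · obtain ⟨c, hc, hE⟩ := h ω hS
    exact (if_pos hE).symm.le.trans (single_le_sum (fun c _ => hterm c) hc)
  · exact sum_nonneg fun c _ => hterm c

theorem prOmega_toep_mulVec_eq_zero_le (hp0 : 0 ≤ p) (hp : p ≤ 1 / 2) {d : ℕ} (hd : 0 < d)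
    (H1 : Matrix (Fin nb) (Fin n) (ZMod 2)) {c : Fin d → Fin n → ZMod 2} (hc : c ⟨0, hd⟩ ≠ 0) :
    prOmega p d (fun ω => toep nb n (seq H1 ω) d *ᵥ flat c = 0) ≤ (1 - p) ^ (nb * (d - 1)) := by
  -- for `τ ≥ 2`, block row `τ - 1` is the first one to involve `H_τ`, and it does so via `H_τ c₁`
  set T : Finset (Fin (d + 1)) := {τ | ¬(τ : ℕ) < 2}
  have hT : #T = d - 1 := by
    have := card_filter_add_card_filter_not (s := univ) fun τ : Fin (d + 1) => (τ : ℕ) < 2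
    rw [Fin.card_filter_val_lt, card_univ, Fintype.card_fin] at this
    simp only [T]
    omega
  let A : Fin (d + 1) → (Fin (d + 1) → Matrix (Fin nb) (Fin n) (ZMod 2)) → Prop :=
    fun τ ω => blockRow (seq H1 ω) c (τ - 1) = 0
  have hA : ∀ σ ∈ T, ∀ τ ∈ T, σ < τ → ∀ ω M, (A σ (update ω τ M) ↔ A σ ω) :=
    fun σ hσ τ _ hστ ω M => Eq.congr_left <|
      blockRow_seq_update_of_lt H1 ω τ M c (by have := (mem_filter.1 hσ).2; omega) hστ
  have hq : ∀ τ ∈ T, ∀ ω, ∑ M, (if A τ (update ω τ M) then matWt p M else 0) ≤ (1 - p) ^ nb := by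
    intro τ hτ ω
    simp only [A, blockRow_seq_update_eq_zero_iff H1 ω τ _ hd c (not_lt.1 (mem_filter.1 hτ).2)]
    exact sum_ite_mulVec_eq_le hp0 hp hc _
  calc prOmega p d (fun ω => toep nb n (seq H1 ω) d *ᵥ flat c = 0)
      ≤ prOmega p d (fun ω => ∀ τ ∈ T, A τ ω) :=
        prOmega_mono hp0 (by linarith) fun ω h τ hτ =>
          (toep_mulVec_flat_eq_zero_iff _ c).1 h ⟨τ - 1, by omega⟩
    _ ≤ ((1 - p) ^ nb) ^ #T := by
        unfold prOmega tupWt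
        -- `convert` reconciles the classical decidability instances of `prOmega` with ours
        convert sum_ite_forall_prod_le_pow (matWt_nonneg hp0 (by linarith)) (sum_matWt p) T A hA
          fun τ hτ ω => by convert hq τ hτ ω
    _ = (1 - p) ^ (nb * (d - 1)) := by rw [hT, pow_mul]

end Ensemble

theorem two_rpow_mul_pow_eq {k n d : ℕ} (hkn : k < n) (hd : 0 < d) {q : ℝ} (hq : 0 < q) (h : ℝ) :
    2 ^ (((n * d : ℕ) : ℝ) * h) * q ^ ((n - k) * (d - 1)) =
      q ^ (-((n - k : ℕ) : ℝ)) *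
        2 ^ (-((n * d : ℕ) : ℝ) * ((1 - (k : ℝ) / n) * Real.logb 2 (1 / q) - h)) := by
  have hn : (n : ℝ) ≠ 0 := Nat.cast_ne_zero.2 (by omega)
  have hexp : -((n * d : ℕ) : ℝ) * ((1 - (k : ℝ) / n) * Real.logb 2 (1 / q) - h) =
      (n * d : ℕ) * h + Real.logb 2 (1 / q) * (-(((n - k : ℕ) : ℝ) * d)) := by
    push_cast [Nat.cast_sub hkn.le]
    field_simp
    ring
  rw [hexp, Real.rpow_add two_pos, Real.rpow_mul zero_le_two (Real.logb 2 (1 / q)),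
    Real.rpow_logb two_pos (by norm_num) (by positivity), one_div, Real.inv_rpow hq.le,
    ← Real.rpow_neg hq.le, neg_neg, mul_left_comm, ← Real.rpow_add hq, ← Real.rpow_natCast]
  congr 2
  push_cast [Nat.cast_sub hkn.le, Nat.cast_sub hd]
  ring

theorem toeplitz_min_distance_prob_general
    (k n : ℕ) (hkn : k < n)
    (p : ℝ) (hp0 : 0 < p) (hp : p ≤ 1 / 2)
    (α : ℝ) (hα0 : 0 < α) (hα : α ≤ 1 / 2)
    (d : ℕ) (hd : 0 < d)
    (H1 : Matrix (Fin (n - k)) (Fin n) (ZMod 2)) :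
    prOmega p d (fun ω =>
        ∃ c ∈ Cset (n - k) n (seq H1 ω) d hd, (wt c : ℝ) < α * n * d)
      ≤ (1 - p) ^ (-((n - k : ℕ) : ℝ)) *
        2 ^ (-((n * d : ℕ) : ℝ) *
          ((1 - (k : ℝ) / n) * Real.logb 2 (1 / (1 - p)) - binH α)) := by
  set B : Finset (Fin d → Fin n → ZMod 2) := {c | (wt c : ℝ) < α * n * d ∧ c ⟨0, hd⟩ ≠ 0}
  have hB : (#B : ℝ) ≤ 2 ^ (((n * d : ℕ) : ℝ) * binH α) :=
    le_trans (Nat.cast_le.2 (card_le_card (monotone_filter_right _ fun _ _ hc => hc.1)))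
      (card_wt_lt_le hα0 hα)
  calc prOmega p d (fun ω => ∃ c ∈ Cset (n - k) n (seq H1 ω) d hd, (wt c : ℝ) < α * n * d)
      ≤ ∑ c ∈ B, prOmega p d (fun ω => toep (n - k) n (seq H1 ω) d *ᵥ flat c = 0) :=
        prOmega_le_sum hp0.le (by linarith) B _ fun ω ⟨c, hc, hw⟩ =>
          ⟨c, mem_filter.2 ⟨mem_univ c, hw, (mem_filter.1 hc).2.2⟩, (mem_filter.1 hc).2.1⟩
    _ ≤ ∑ _c ∈ B, (1 - p) ^ ((n - k) * (d - 1)) :=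
        sum_le_sum fun c hc => prOmega_toep_mulVec_eq_zero_le hp0.le hp hd H1 (mem_filter.1 hc).2.2
    _ ≤ 2 ^ (((n * d : ℕ) : ℝ) * binH α) * (1 - p) ^ ((n - k) * (d - 1)) := by
        rw [sum_const, nsmul_eq_mul]
        exact mul_le_mul_of_nonneg_right hB (pow_nonneg (by linarith) _)
    _ = _ := two_rpow_mul_pow_eq hkn hd (by linarith) _

theorem toeplitz_min_distance_prob
    (k n : ℕ) (hk : 0 < k) (hkn : k < n)
    (p : ℝ) (hp0 : 0 < p) (hp : p ≤ 1 / 2)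
    (α : ℝ) (hα0 : 0 < α) (hα : α ≤ 1 / 2)
    (d : ℕ) (hd : 0 < d)
    (H1 : Matrix (Fin (n - k)) (Fin n) (ZMod 2)) :
    prOmega p d (fun ω =>
        ∃ c ∈ Cset (n - k) n (seq H1 ω) d hd, (wt c : ℝ) < α * n * d)
      ≤ (1 - p) ^ (-((n - k : ℕ) : ℝ)) *
        2 ^ (-((n * d : ℕ) : ℝ) *
          ((1 - (k : ℝ) / n) * Real.logb 2 (1 / (1 - p)) - binH α)) :=
  toeplitz_min_distance_prob_general k n hkn p hp0 hp α hα0 hα d hd H1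
end

section
/- For every R ∈ (0,1), the supremum over x ∈ (0,1] of (H(x) − (1−R))/x equals log₂(1/(2^{1−R} − 1)), and it is attained at x = 1 − 2^{R−1}. -/
lemma kl_nonneg (x p : ℝ) (hx : 0 < x) (hx1 : x ≤ 1) (hp : 0 < p) (hp1 : p < 1) :
    x * Real.log p + (1 - x) * Real.log (1 - p) ≤
      x * Real.log x + (1 - x) * Real.log (1 - x) := by
  have h1 : x * (Real.log p - Real.log x) ≤ p - x := by
    have hpx : 0 < p / x := div_pos hp hx
    have := Real.log_le_sub_one_of_pos hpx
    rw [Real.log_div (ne_of_gt hp) (ne_of_gt hx)] at this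
    have h2 : x * (Real.log p - Real.log x) ≤ x * (p / x - 1) := by
      exact mul_le_mul_of_nonneg_left this (le_of_lt hx)
    calc x * (Real.log p - Real.log x) ≤ x * (p / x - 1) := h2
      _ = p - x := by field_simp
  rcases eq_or_lt_of_le hx1 with h | h
  · subst h
    have : Real.log (1 - p) ≤ 0 := Real.log_nonpos (by linarith) (by linarith)
    nlinarith [h1]
  · have hx' : 0 < 1 - x := by linarith
    have h2 : (1 - x) * (Real.log (1 - p) - Real.log (1 - x)) ≤ (1 - p) - (1 - x) := by
      have hpx : 0 < (1 - p) / (1 - x) := div_pos (by linarith) hx'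
      have := Real.log_le_sub_one_of_pos hpx
      rw [Real.log_div (by linarith) (ne_of_gt hx')] at this
      calc (1 - x) * (Real.log (1 - p) - Real.log (1 - x))
          ≤ (1 - x) * ((1 - p) / (1 - x) - 1) :=
            mul_le_mul_of_nonneg_left this (le_of_lt hx')
        _ = (1 - p) - (1 - x) := by field_simp
    nlinarith [h1, h2]

lemma gibbs (x p : ℝ) (hx : 0 < x) (hx1 : x ≤ 1) (hp : 0 < p) (hp1 : p < 1) :
    binH x ≤ -(x * Real.logb 2 p) - (1 - x) * Real.logb 2 (1 - p) := by
  have hL : (0:ℝ) < Real.log 2 := Real.log_pos one_lt_two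
  have h := kl_nonneg x p hx hx1 hp hp1
  unfold binH Real.logb
  have key : (x * Real.log p + (1 - x) * Real.log (1 - p)) / Real.log 2 ≤
      (x * Real.log x + (1 - x) * Real.log (1 - x)) / Real.log 2 :=
    (div_le_div_iff_of_pos_right hL).mpr h
  have e1 : -(x * (Real.log x / Real.log 2)) - (1 - x) * (Real.log (1 - x) / Real.log 2)
      = -((x * Real.log x + (1 - x) * Real.log (1 - x)) / Real.log 2) := by ring
  have e2 : -(x * (Real.log p / Real.log 2)) - (1 - x) * (Real.log (1 - p) / Real.log 2)
      = -((x * Real.log p + (1 - x) * Real.log (1 - p)) / Real.log 2) := by ring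
  rw [e1, e2]
  linarith

theorem sup_entropy_rate_ratio (R : ℝ) (hR0 : 0 < R) (hR1 : R < 1) :
    (∀ x : ℝ, 0 < x → x ≤ 1 →
        (binH x - (1 - R)) / x ≤ Real.logb 2 (1 / (2 ^ (1 - R) - 1))) ∧
    (0 < 1 - (2 : ℝ) ^ (R - 1) ∧ 1 - (2 : ℝ) ^ (R - 1) ≤ 1) ∧
    (binH (1 - (2 : ℝ) ^ (R - 1)) - (1 - R)) / (1 - (2 : ℝ) ^ (R - 1))
      = Real.logb 2 (1 / (2 ^ (1 - R) - 1)) := by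
  set p : ℝ := 1 - (2:ℝ) ^ (R - 1) with hpdef
  have h2pos : (0:ℝ) < (2:ℝ) ^ (R - 1) := Real.rpow_pos_of_pos (by norm_num) _
  have h2lt1 : (2:ℝ) ^ (R - 1) < 1 :=
    Real.rpow_lt_one_of_one_lt_of_neg (by norm_num) (by linarith)
  have hp0 : 0 < p := by simp [hpdef]; linarith
  have hp1 : p < 1 := by simp [hpdef]; linarith
  have h1R : (1:ℝ) < (2:ℝ) ^ (1 - R) := Real.one_lt_rpow (by norm_num) (by linarith)
  have hsub : (0:ℝ) < (2:ℝ) ^ (1 - R) - 1 := by linarith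
  -- key algebraic identity
  have hmul : (2:ℝ) ^ (1 - R) - 1 = (2:ℝ) ^ (1 - R) * p := by
    have : (2:ℝ) ^ (1 - R) * (2:ℝ) ^ (R - 1) = 1 := by
      rw [← Real.rpow_add (by norm_num)]; norm_num
    rw [hpdef]; linear_combination this
  have hlogb1R : Real.logb 2 ((2:ℝ) ^ (1 - R)) = 1 - R :=
    Real.logb_rpow (by norm_num) (by norm_num)
  have hlogbR1 : Real.logb 2 ((2:ℝ) ^ (R - 1)) = R - 1 :=
    Real.logb_rpow (by norm_num) (by norm_num)
  have hc : Real.logb 2 (1 / ((2:ℝ) ^ (1 - R) - 1)) = R - 1 - Real.logb 2 p := by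
    rw [one_div, Real.logb_inv, hmul,
      Real.logb_mul (by positivity) (ne_of_gt hp0), hlogb1R]
    ring
  refine ⟨?_, ⟨hp0, by linarith⟩, ?_⟩
  · intro x hx hx1
    have hg := gibbs x p hx hx1 hp0 hp1
    have h1p : (1:ℝ) - p = (2:ℝ) ^ (R - 1) := by rw [hpdef]; ring
    rw [h1p, hlogbR1] at hg
    rw [hc, div_le_iff₀ hx]
    nlinarith [hg]
  · have h1p : (1:ℝ) - p = (2:ℝ) ^ (R - 1) := by rw [hpdef]; ring
    have hbin : binH p = -(p * Real.logb 2 p) - (1 - p) * (R - 1) := by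
      unfold binH; rw [h1p, hlogbR1]
    rw [hc, hbin, div_eq_iff (ne_of_gt hp0)]
    ring
end

section
/- Fix matrices (H_τ)_{τ≥1}, an integer d ≥ 1, ε ∈ (0,1/2), and δ > 0 with ε + δ < 1. Let V = (V₁,…,V_{nd}) have i.i.d. Bernoulli(ε) entries. Then the probability that there exists c ∈ C_d with 2·#{i : c_i = 1 and V_i = 1} ≥ ‖c‖ is at most Σ_{w : minW(d) ≤ w ≤ 2nd(ε+δ)} numW(w,d)·(4ε(1−ε))^{w/2} + 2^{−nd·KL(ε+δ‖ε)}, where KL(q‖ε) = q·log₂(q/ε) + (1−q)·log₂((1−q)/(1−ε)). In particular, if minW(d) > 2nd(ε+δ), the probability is at most 2^{−nd·KL(ε+δ‖ε)}. -/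
/-!
Split the error event according to the number `|V|` of flipped bits. If `|V| ≤ nd(ε+δ)`, a
witness `c` has `‖c‖ ≤ 2|V| ≤ 2nd(ε+δ)`, so a union bound over these light codewords applies; the
probability that at least half of a fixed support of size `w` is flipped is, by the
exponential-moment bound `P(m ≥ a) ≤ t^{-a} E[t^m]` at `t = (1-ε)/ε`, at most `(4ε(1-ε))^{w/2}`.
The remaining event `|V| > nd(ε+δ)` has probability at most `2^{-nd·KL(ε+δ‖ε)}`: the same bound
over all `nd` coordinates, now at `t = (ε+δ)(1-ε) / (ε(1-ε-δ))`.
-/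

open scoped BigOperators

open Finset

theorem ZMod.sum_univ_two {M : Type*} [AddCommMonoid M] (f : ZMod 2 → M) :
    ∑ x, f x = f 0 + f 1 :=
  Fin.sum_univ_two f

noncomputable def binaryKL (q p : ℝ) : ℝ :=
  q * Real.logb 2 (q / p) + (1 - q) * Real.logb 2 ((1 - q) / (1 - p))

section Bernoulli

variable {ι : Type*} [Fintype ι]

theorem hammingNorm_eq_card_eq_one (g : ι → ZMod 2) : hammingNorm g = #{i | g i = 1} := by
  have h : ∀ x : ZMod 2, x ≠ 0 ↔ x = 1 := by decide
  simp only [hammingNorm, h]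

def bernProb (p : ℝ) (V : ι → ZMod 2) : ℝ := ∏ i, if V i = 1 then p else 1 - p

variable {p : ℝ}

theorem bernProb_nonneg (hp0 : 0 ≤ p) (hp1 : p ≤ 1) (V : ι → ZMod 2) : 0 ≤ bernProb p V :=
  prod_nonneg fun i _ => by split_ifs <;> linarith

theorem ite_bernProb_nonneg (hp0 : 0 ≤ p) (hp1 : p ≤ 1) (P : Prop) [Decidable P]
    (V : ι → ZMod 2) : 0 ≤ if P then bernProb p V else 0 := by
  split_ifs
  exacts [bernProb_nonneg hp0 hp1 V, le_rfl]

variable [DecidableEq ι]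

def probOf (p : ℝ) (E : (ι → ZMod 2) → Prop) [DecidablePred E] : ℝ :=
  ∑ V, if E V then bernProb p V else 0

theorem probOf_mono (hp0 : 0 ≤ p) (hp1 : p ≤ 1) {E F : (ι → ZMod 2) → Prop}
    [DecidablePred E] [DecidablePred F] (h : ∀ V, E V → F V) : probOf p E ≤ probOf p F := by
  refine sum_le_sum fun V _ => ?_
  by_cases hE : E V
  · rw [if_pos hE, if_pos (h V hE)]
  · rw [if_neg hE]
    exact ite_bernProb_nonneg hp0 hp1 _ V

theorem probOf_or_le (hp0 : 0 ≤ p) (hp1 : p ≤ 1) (E F : (ι → ZMod 2) → Prop)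
    [DecidablePred E] [DecidablePred F] :
    probOf p (fun V => E V ∨ F V) ≤ probOf p E + probOf p F := by
  rw [probOf, probOf, probOf, ← sum_add_distrib]
  refine sum_le_sum fun V _ => ?_
  have := bernProb_nonneg hp0 hp1 V
  split_ifs <;> simp_all

theorem probOf_exists_le (hp0 : 0 ≤ p) (hp1 : p ≤ 1) {α : Type*} (s : Finset α)
    (E : α → (ι → ZMod 2) → Prop) [∀ a, DecidablePred (E a)] :
    probOf p (fun V => ∃ a ∈ s, E a V) ≤ ∑ a ∈ s, probOf p (E a) := by
  simp only [probOf]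
  rw [sum_comm]
  refine sum_le_sum fun V _ => ?_
  split_ifs with h
  · obtain ⟨a, ha, hE⟩ := h
    calc bernProb p V = if E a V then bernProb p V else 0 := (if_pos hE).symm
      _ ≤ _ := single_le_sum (f := fun a => if E a V then bernProb p V else 0)
          (fun b _ => ite_bernProb_nonneg hp0 hp1 _ V) ha
  · exact sum_nonneg fun b _ => ite_bernProb_nonneg hp0 hp1 _ V

theorem sum_bernProb_mul_pow_card_filter (p t : ℝ) (S : Finset ι) :
    ∑ V, bernProb p V * t ^ #{i ∈ S | V i = 1} = (p * t + (1 - p)) ^ #S := by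
  have hterm : ∀ V : ι → ZMod 2, bernProb p V * t ^ #{i ∈ S | V i = 1} =
      ∏ i, (if V i = 1 then p * (if i ∈ S then t else 1) else 1 - p) := by
    intro V
    rw [bernProb, ← prod_const, prod_filter, ← prod_ite_mem_eq S, ← prod_mul_distrib]
    refine prod_congr rfl fun i _ => ?_
    split_ifs <;> simp_all
  have hfactor : ∀ i, ∑ x : ZMod 2, (if x = 1 then p * (if i ∈ S then t else 1) else 1 - p) =
      if i ∈ S then p * t + (1 - p) else 1 := by
    intro i
    rw [ZMod.sum_univ_two, if_neg zero_ne_one, if_pos rfl]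
    split_ifs <;> ring
  simp_rw [hterm]
  rw [← Fintype.prod_sum fun i (x : ZMod 2) =>
    if x = 1 then p * (if i ∈ S then t else 1) else 1 - p]
  simp_rw [hfactor, prod_ite_mem_eq, prod_const]

theorem probOf_le_card_filter_le (hp0 : 0 ≤ p) (hp1 : p ≤ 1) {t : ℝ} (ht : 1 ≤ t) (a : ℝ)
    (S : Finset ι) :
    probOf p (fun V => a ≤ #{i ∈ S | V i = 1}) ≤ (p * t + (1 - p)) ^ #S / t ^ a := by
  have ht0 : 0 < t := by linarith
  calc probOf p (fun V => a ≤ #{i ∈ S | V i = 1})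
      ≤ ∑ V, bernProb p V * t ^ ((#{i ∈ S | V i = 1} : ℝ) - a) := by
        refine sum_le_sum fun V _ => ?_
        have hP := bernProb_nonneg hp0 hp1 V
        split_ifs with h
        · exact le_mul_of_one_le_right hP (Real.one_le_rpow ht (sub_nonneg.mpr h))
        · exact mul_nonneg hP (Real.rpow_nonneg ht0.le _)
    _ = (∑ V, bernProb p V * t ^ #{i ∈ S | V i = 1}) / t ^ a := by
        simp_rw [Real.rpow_sub ht0, Real.rpow_natCast, sum_div, mul_div_assoc]
    _ = _ := by rw [sum_bernProb_mul_pow_card_filter]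

theorem probOf_half_support_flipped_le {ε : ℝ} (hε0 : 0 < ε) (hε1 : ε ≤ 1 / 2)
    (g : ι → ZMod 2) :
    probOf ε (fun V => hammingNorm g ≤ 2 * #{i | g i = 1 ∧ V i = 1}) ≤
      (4 * ε * (1 - ε)) ^ ((hammingNorm g : ℝ) / 2) := by
  set S : Finset ι := {i | g i = 1}
  have hw : hammingNorm g = #S := hammingNorm_eq_card_eq_one g
  have ht : 1 ≤ (1 - ε) / ε := by rw [one_le_div hε0]; linarith
  have hmono : ∀ V : ι → ZMod 2, hammingNorm g ≤ 2 * #{i | g i = 1 ∧ V i = 1} →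
      (hammingNorm g : ℝ) / 2 ≤ #{i ∈ S | V i = 1} := by
    intro V h
    rw [filter_filter, div_le_iff₀ two_pos]
    exact_mod_cast (by omega : hammingNorm g ≤ #{i | g i = 1 ∧ V i = 1} * 2)
  have hbound : (ε * ((1 - ε) / ε) + (1 - ε)) ^ #S =
      (4 * (1 - ε) ^ 2) ^ ((hammingNorm g : ℝ) / 2) := by
    rw [← Real.rpow_natCast, ← hw, show 4 * (1 - ε) ^ 2 = (2 * (1 - ε)) ^ (2 : ℝ) by
      rw [Real.rpow_two]; ring, ← Real.rpow_mul (by linarith)]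
    congr 1
    · field_simp; ring
    · ring
  calc _ ≤ (ε * ((1 - ε) / ε) + (1 - ε)) ^ #S / ((1 - ε) / ε) ^ ((hammingNorm g : ℝ) / 2) :=
        (probOf_mono hε0.le (by linarith) hmono).trans
          (probOf_le_card_filter_le hε0.le (by linarith) ht _ S)
    _ = (4 * ε * (1 - ε)) ^ ((hammingNorm g : ℝ) / 2) := by
        rw [hbound, ← Real.div_rpow (by positivity) (by linarith)]
        congr 1
        field_simp

theorem probOf_card_mul_le_card_flipped_le {ε q : ℝ} (hε0 : 0 < ε) (hεq : ε ≤ q) (hq1 : q < 1) :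
    probOf ε (fun V : ι → ZMod 2 => Fintype.card ι * q ≤ #{i | V i = 1}) ≤
      2 ^ (-(Fintype.card ι : ℝ) * binaryKL q ε) := by
  set A := q / ε
  set B := (1 - q) / (1 - ε)
  have hA : 1 ≤ A := by rw [one_le_div hε0]; exact hεq
  have hB0 : 0 < B := div_pos (by linarith) (by linarith)
  have hB1 : B ≤ 1 := by rw [div_le_one (by linarith)]; linarith
  have hmgf : ε * (A / B) + (1 - ε) = B⁻¹ := by
    have : 1 - q ≠ 0 := by linarith
    have : 1 - ε ≠ 0 := by linarith
    simp only [A, B]; field_simp; ring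
  calc _ ≤ (ε * (A / B) + (1 - ε)) ^ #(univ : Finset ι) / (A / B) ^ (Fintype.card ι * q) :=
        probOf_le_card_filter_le hε0.le (by linarith)
          ((one_le_div hB0).mpr (hB1.trans hA)) _ univ
    _ = _ := by
        have hA0 : 0 < A := by linarith
        rw [hmgf, card_univ, ← Real.rpow_logb (x := B⁻¹ ^ Fintype.card ι /
          (A / B) ^ (Fintype.card ι * q)) two_pos (by norm_num) (by positivity)]
        congr 1
        rw [Real.logb_div (by positivity) (by positivity), Real.logb_pow, Real.logb_inv,
          Real.logb_rpow_eq_mul_logb_of_pos (by positivity),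
          Real.logb_div hA0.ne' hB0.ne', binaryKL]
        ring

theorem probOf_exists_half_support_flipped_le {α : Type*} (C : Finset α) (x : α → ι → ZMod 2)
    {ε q : ℝ} (hε0 : 0 < ε) (hε1 : ε ≤ 1 / 2) (hεq : ε ≤ q) (hq1 : q < 1) :
    probOf ε (fun V => ∃ c ∈ C, hammingNorm (x c) ≤ 2 * #{i | x c i = 1 ∧ V i = 1}) ≤
      ∑ c ∈ C with (hammingNorm (x c) : ℝ) ≤ 2 * Fintype.card ι * q,
          (4 * ε * (1 - ε)) ^ ((hammingNorm (x c) : ℝ) / 2) +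
        2 ^ (-(Fintype.card ι : ℝ) * binaryKL q ε) := by
  have hε1' : ε ≤ 1 := by linarith
  set N := Fintype.card ι
  have hsplit : ∀ V : ι → ZMod 2,
      (∃ c ∈ C, hammingNorm (x c) ≤ 2 * #{i | x c i = 1 ∧ V i = 1}) →
      (∃ c ∈ ({c ∈ C | (hammingNorm (x c) : ℝ) ≤ 2 * N * q} : Finset α),
          hammingNorm (x c) ≤ 2 * #{i | x c i = 1 ∧ V i = 1}) ∨
        N * q ≤ #{i | V i = 1} := by
    rintro V ⟨c, hc, hcV⟩
    refine (le_or_gt (N * q) #{i | V i = 1}).symm.imp_left fun hV => ⟨c, ?_, hcV⟩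
    have hsub : #{i | x c i = 1 ∧ V i = 1} ≤ #{i | V i = 1} :=
      card_le_card fun i => by simp +contextual
    have : (hammingNorm (x c) : ℝ) ≤ 2 * #{i | V i = 1} := by exact_mod_cast hcV.trans (by omega)
    exact mem_filter.mpr ⟨hc, by linarith⟩
  calc _ ≤ _ := probOf_mono hε0.le hε1' hsplit
    _ ≤ _ := probOf_or_le hε0.le hε1' _ _
    _ ≤ _ := add_le_add ((probOf_exists_le hε0.le hε1' _ _).trans
          (sum_le_sum fun c _ => probOf_half_support_flipped_le hε0 hε1 (x c)))
        (probOf_card_mul_le_card_flipped_le hε0 hεq hq1)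

end Bernoulli

theorem sum_filter_le_eq_sum_range {α : Type*} (C : Finset α) (f : α → ℕ) (g : ℕ → ℝ) (N : ℕ)
    (hf : ∀ c ∈ C, f c ≤ N) (B : ℝ) :
    ∑ c ∈ C with (f c : ℝ) ≤ B, g (f c) =
      ∑ w ∈ range (N + 1),
        if (∃ c ∈ C, f c ≤ w) ∧ (w : ℝ) ≤ B then (#{c ∈ C | f c = w} : ℝ) * g w else 0 := by
  rw [← sum_fiberwise_of_maps_to (g := f) (t := range (N + 1))
    fun c hc => mem_range_succ_iff.mpr (hf c (mem_filter.mp hc).1)]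
  refine sum_congr rfl fun w _ => ?_
  rw [filter_filter]
  split_ifs with h
  · have hfiber : {c ∈ C | (f c : ℝ) ≤ B ∧ f c = w} = {c ∈ C | f c = w} :=
      filter_congr fun c _ => ⟨And.right, fun hc => ⟨hc ▸ h.2, hc⟩⟩
    rw [hfiber, sum_congr rfl fun c hc => by rw [(mem_filter.mp hc).2], sum_const, nsmul_eq_mul]
  · refine sum_eq_zero fun c hc => absurd ?_ h
    obtain ⟨hcC, hcB, rfl⟩ := mem_filter.mp hc
    exact ⟨⟨c, hcC, le_rfl⟩, hcB⟩

open scoped Classical in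
theorem bsc_tighter_union_bound_general
    (k n : ℕ)
    (Hs : ℕ → Matrix (Fin (n - k)) (Fin n) (ZMod 2))
    (d : ℕ) (hd : 0 < d)
    (ε δ : ℝ) (hε0 : 0 < ε) (hε1 : ε < 1 / 2) (hδ : 0 < δ) (hεδ : ε + δ < 1) :
    (∑ V : Fin d × Fin n → ZMod 2,
        (if ∃ c ∈ Cset (n - k) n Hs d hd,
            wt c ≤ 2 * (Finset.univ.filter fun i => flat c i = 1 ∧ V i = 1).card then
          ∏ i, (if V i = 1 then ε else 1 - ε) else 0)
      ≤ (∑ w ∈ Finset.range (n * d + 1),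
          if (∃ c ∈ Cset (n - k) n Hs d hd, wt c ≤ w) ∧ (w : ℝ) ≤ 2 * n * d * (ε + δ) then
            (numW (n - k) n Hs d hd w : ℝ) * (4 * ε * (1 - ε)) ^ ((w : ℝ) / 2)
          else 0)
        + 2 ^ (-((n * d : ℕ) : ℝ) *
            ((ε + δ) * Real.logb 2 ((ε + δ) / ε) +
              (1 - (ε + δ)) * Real.logb 2 ((1 - (ε + δ)) / (1 - ε)))))
    ∧ ((∀ c ∈ Cset (n - k) n Hs d hd, 2 * n * d * (ε + δ) < (wt c : ℝ)) →
      ∑ V : Fin d × Fin n → ZMod 2,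
          (if ∃ c ∈ Cset (n - k) n Hs d hd,
              wt c ≤ 2 * (Finset.univ.filter fun i => flat c i = 1 ∧ V i = 1).card then
            ∏ i, (if V i = 1 then ε else 1 - ε) else 0)
        ≤ 2 ^ (-((n * d : ℕ) : ℝ) *
            ((ε + δ) * Real.logb 2 ((ε + δ) / ε) +
              (1 - (ε + δ)) * Real.logb 2 ((1 - (ε + δ)) / (1 - ε))))) := by
  have hN : Fintype.card (Fin d × Fin n) = n * d := by simp [mul_comm]
  have hB : 2 * ((n * d : ℕ) : ℝ) * (ε + δ) = 2 * n * d * (ε + δ) := by push_cast; ring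
  have key := probOf_exists_half_support_flipped_le (Cset (n - k) n Hs d hd) flat hε0 hε1.le
    (by linarith) hεδ
  simp only [hN, hB, show ∀ c : Fin d → Fin n → ZMod 2, hammingNorm (flat c) = wt c from
    fun _ => rfl] at key
  refine ⟨?_, fun hmin => ?_⟩
  · rw [sum_filter_le_eq_sum_range _ wt (fun w : ℕ => (4 * ε * (1 - ε)) ^ ((w : ℝ) / 2)) (n * d)
      fun c _ => hN ▸ hammingNorm_le_card_fintype] at key
    exact key
  · rw [filter_false_of_mem fun c hc => not_le.mpr (hmin c hc), sum_empty, zero_add] at key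
    exact key

open scoped Classical in
theorem bsc_tighter_union_bound
    (k n : ℕ) (hk : 0 < k) (hkn : k < n)
    (Hs : ℕ → Matrix (Fin (n - k)) (Fin n) (ZMod 2))
    (d : ℕ) (hd : 0 < d)
    (ε δ : ℝ) (hε0 : 0 < ε) (hε1 : ε < 1 / 2) (hδ : 0 < δ) (hεδ : ε + δ < 1) :
    (∑ V : Fin d × Fin n → ZMod 2,
        (if ∃ c ∈ Cset (n - k) n Hs d hd,
            wt c ≤ 2 * (Finset.univ.filter fun i => flat c i = 1 ∧ V i = 1).card then
          ∏ i, (if V i = 1 then ε else 1 - ε) else 0)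
      ≤ (∑ w ∈ Finset.range (n * d + 1),
          if (∃ c ∈ Cset (n - k) n Hs d hd, wt c ≤ w) ∧ (w : ℝ) ≤ 2 * n * d * (ε + δ) then
            (numW (n - k) n Hs d hd w : ℝ) * (4 * ε * (1 - ε)) ^ ((w : ℝ) / 2)
          else 0)
        + 2 ^ (-((n * d : ℕ) : ℝ) *
            ((ε + δ) * Real.logb 2 ((ε + δ) / ε) +
              (1 - (ε + δ)) * Real.logb 2 ((1 - (ε + δ)) / (1 - ε)))))
    ∧ ((∀ c ∈ Cset (n - k) n Hs d hd, 2 * n * d * (ε + δ) < (wt c : ℝ)) →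
      ∑ V : Fin d × Fin n → ZMod 2,
          (if ∃ c ∈ Cset (n - k) n Hs d hd,
              wt c ≤ 2 * (Finset.univ.filter fun i => flat c i = 1 ∧ V i = 1).card then
            ∏ i, (if V i = 1 then ε else 1 - ε) else 0)
        ≤ 2 ^ (-((n * d : ℕ) : ℝ) *
            ((ε + δ) * Real.logb 2 ((ε + δ) / ε) +
              (1 - (ε + δ)) * Real.logb 2 ((1 - (ε + δ)) / (1 - ε))))) :=
  bsc_tighter_union_bound_general k n Hs d hd ε δ hε0 hε1 hδ hεδ
end
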